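/- For ω with 0 < ω < 3, the function u(x,t) = −ω/3 + (1/3)·√(2ω(3−ω)) − √(2ω(3−ω))·sech²(η), where η = (1/2)·(ω(3−ω)/2)^{1/4}·(x − ωt) and sech = 1/cosh, is a solution of the modified Camassa–Holm equation u_t − u_{xxt} + 3u²u_x = 2u_x u_{xx} + u u_{xxx}. -/

import Mathlib

/-!
For a traveling wave `u x t = φ (x - ω t)` the equation reduces to the ODE
`-ω φ' + ω φ''' + 3 φ² φ' = 2 φ' φ'' + φ φ'''`. For `φ = A - B S` with `S = sech² (k ξ)` and
`T = tanh (k ξ)` one has `S' = -2k S T`, `T' = k S` and `T² = 1 - S`, so every derivative of `φ`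
is a polynomial in `S` times a power of `T`: `φ' = 2Bk S T`, `φ'' = 2Bk² (3S² - 2S)`,
`φ''' = -8Bk³ (3S - 1) S T`. The ODE then becomes `φ' · P(S) = 0` with `P` a quadratic whose
coefficients vanish when `8k² = B`, `3A = B - ω` and `B² = 2ω(3 - ω)`.
-/

open Real

section Derivatives

variable {𝕜 F : Type*} [NontriviallyNormedField 𝕜] [NormedAddCommGroup F] [NormedSpace 𝕜 F]

theorem iteratedDeriv_eq_of_hasDerivAt {f f₁ f₂ f₃ : 𝕜 → F}
    (h₁ : ∀ x, HasDerivAt f (f₁ x) x) (h₂ : ∀ x, HasDerivAt f₁ (f₂ x) x)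
    (h₃ : ∀ x, HasDerivAt f₂ (f₃ x) x) :
    deriv f = f₁ ∧ iteratedDeriv 2 f = f₂ ∧ iteratedDeriv 3 f = f₃ := by
  have hd₁ : deriv f = f₁ := funext fun x => (h₁ x).deriv
  have hd₂ : iteratedDeriv 2 f = f₂ := by
    rw [iteratedDeriv_succ, iteratedDeriv_one, hd₁]
    exact funext fun x => (h₂ x).deriv
  refine ⟨hd₁, hd₂, ?_⟩
  rw [iteratedDeriv_succ, hd₂]
  exact funext fun x => (h₃ x).deriv

theorem HasDerivAt.comp_const_sub_mul {f : 𝕜 → F} {f' : F} (x c t : 𝕜)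
    (hf : HasDerivAt f f' (x - c * t)) :
    HasDerivAt (fun s => f (x - c * s)) (-c • f') t := by
  have hlin : HasDerivAt (fun s => x - c * s) (-c) t := by
    simpa using ((hasDerivAt_id t).const_mul c).const_sub x
  exact hf.scomp t hlin

end Derivatives

theorem modifiedCamassaHolm_of_travelingWave {φ φ₁ φ₂ φ₃ : ℝ → ℝ} {c : ℝ} {u : ℝ → ℝ → ℝ}
    (hu : ∀ x t, u x t = φ (x - c * t))
    (h₁ : ∀ ξ, HasDerivAt φ (φ₁ ξ) ξ) (h₂ : ∀ ξ, HasDerivAt φ₁ (φ₂ ξ) ξ)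
    (h₃ : ∀ ξ, HasDerivAt φ₂ (φ₃ ξ) ξ)
    (hode : ∀ ξ, -c * φ₁ ξ + c * φ₃ ξ + 3 * φ ξ ^ 2 * φ₁ ξ = 2 * φ₁ ξ * φ₂ ξ + φ ξ * φ₃ ξ)
    (x t : ℝ) :
    deriv (fun s => u x s) t
        - deriv (fun s => iteratedDeriv 2 (fun y => u y s) x) t
        + 3 * (u x t)^2 * deriv (fun y => u y t) x =
      2 * deriv (fun y => u y t) x * iteratedDeriv 2 (fun y => u y t) x
        + u x t * iteratedDeriv 3 (fun y => u y t) x := by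
  have hspace (s : ℝ) := iteratedDeriv_eq_of_hasDerivAt (f := fun y => u y s)
    (fun y => by simpa only [hu] using (h₁ _).comp_sub_const y (c * s))
    (fun y => (h₂ _).comp_sub_const y (c * s)) (fun y => (h₃ _).comp_sub_const y (c * s))
  have htime₀ : deriv (fun s => u x s) t = -c * φ₁ (x - c * t) := by
    simpa only [hu, smul_eq_mul] using ((h₁ _).comp_const_sub_mul x c t).deriv
  have htime₂ : deriv (fun s => iteratedDeriv 2 (fun y => u y s) x) t = -c * φ₃ (x - c * t) := by
    simpa only [(hspace _).2.1, smul_eq_mul] using ((h₃ _).comp_const_sub_mul x c t).deriv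
  rw [htime₀, htime₂, (hspace t).1, (hspace t).2.1, (hspace t).2.2, hu]
  linear_combination hode (x - c * t)

noncomputable def sechSq (y : ℝ) : ℝ := (cosh y)⁻¹ ^ 2

theorem tanh_sq_add_sechSq (y : ℝ) : tanh y ^ 2 + sechSq y = 1 := by
  have := (cosh_pos y).ne'
  rw [sechSq, tanh_eq_sinh_div_cosh]
  field_simp
  linear_combination -cosh_sq_sub_sinh_sq y

theorem hasDerivAt_tanh (y : ℝ) : HasDerivAt tanh (sechSq y) y := by
  have := (cosh_pos y).ne'
  rw [show tanh = fun y => sinh y / cosh y from funext tanh_eq_sinh_div_cosh]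
  refine ((hasDerivAt_sinh y).fun_div (hasDerivAt_cosh y) this).congr_deriv ?_
  unfold sechSq
  field_simp
  linear_combination cosh_sq_sub_sinh_sq y

theorem hasDerivAt_sechSq (y : ℝ) : HasDerivAt sechSq (-2 * sechSq y * tanh y) y := by
  have := (cosh_pos y).ne'
  refine (((hasDerivAt_cosh y).fun_inv this).fun_pow 2).congr_deriv ?_
  unfold sechSq
  rw [tanh_eq_sinh_div_cosh]
  norm_num
  field_simp

section Profile

variable (A B k : ℝ)

theorem hasDerivAt_sechSq_mul (ξ : ℝ) :
    HasDerivAt (fun ξ => sechSq (k * ξ)) (-2 * k * sechSq (k * ξ) * tanh (k * ξ)) ξ :=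
  ((hasDerivAt_sechSq _).comp ξ ((hasDerivAt_id' ξ).const_mul k)).congr_deriv (by ring)

theorem hasDerivAt_tanh_mul (ξ : ℝ) :
    HasDerivAt (fun ξ => tanh (k * ξ)) (k * sechSq (k * ξ)) ξ :=
  ((hasDerivAt_tanh _).comp ξ ((hasDerivAt_id' ξ).const_mul k)).congr_deriv (by ring)

theorem hasDerivAt_sechSq_profile (ξ : ℝ) :
    HasDerivAt (fun ξ => A - B * sechSq (k * ξ)) (2 * B * k * sechSq (k * ξ) * tanh (k * ξ)) ξ :=
  (((hasDerivAt_sechSq_mul k ξ).const_mul B).const_sub A).congr_deriv (by ring)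

theorem hasDerivAt_sechSq_profile_deriv (ξ : ℝ) :
    HasDerivAt (fun ξ => 2 * B * k * sechSq (k * ξ) * tanh (k * ξ))
      (2 * B * k ^ 2 * (3 * sechSq (k * ξ) ^ 2 - 2 * sechSq (k * ξ))) ξ :=
  (((hasDerivAt_sechSq_mul k ξ).const_mul (2 * B * k)).fun_mul
    (hasDerivAt_tanh_mul k ξ)).congr_deriv
    (by linear_combination (-4 * B * k ^ 2 * sechSq (k * ξ)) * tanh_sq_add_sechSq (k * ξ))

theorem hasDerivAt_sechSq_profile_deriv2 (ξ : ℝ) :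
    HasDerivAt (fun ξ => 2 * B * k ^ 2 * (3 * sechSq (k * ξ) ^ 2 - 2 * sechSq (k * ξ)))
      (-8 * B * k ^ 3 * (3 * sechSq (k * ξ) - 1) * sechSq (k * ξ) * tanh (k * ξ)) ξ := by
  have h := hasDerivAt_sechSq_mul k ξ
  exact ((((h.fun_pow 2).const_mul 3).fun_sub (h.const_mul 2)).const_mul
    (2 * B * k ^ 2)).congr_deriv (by push_cast; ring)

end Profile

theorem sechSq_profile_ode {A B k ω : ℝ} (hA : 3 * A = B - ω) (hB : B ^ 2 = 2 * ω * (3 - ω))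
    (hk : 8 * k ^ 2 = B) (S T : ℝ) :
    -ω * (2 * B * k * S * T) + ω * (-8 * B * k ^ 3 * (3 * S - 1) * S * T)
        + 3 * (A - B * S) ^ 2 * (2 * B * k * S * T) =
      2 * (2 * B * k * S * T) * (2 * B * k ^ 2 * (3 * S ^ 2 - 2 * S))
        + (A - B * S) * (-8 * B * k ^ 3 * (3 * S - 1) * S * T) := by
  linear_combination (2 * B * k * S * T) *
    (-((ω - A + B * S) * (3 * S - 1) + B * (3 * S ^ 2 - 2 * S)) / 2 * hk
      + (-(3 * B / 2) * S + (3 * A + B - ω) / 3 - B / 6) * hA + hB / 6)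

theorem rpow_quarter_sq {a : ℝ} (ha : 0 ≤ a) : (a ^ (1 / 4 : ℝ)) ^ 2 = √a := by
  rw [← rpow_natCast, ← rpow_mul ha, sqrt_eq_rpow]
  norm_num

theorem stmt_19 (ω : ℝ) (hω : 0 < ω) (hω3 : ω < 3) (u : ℝ → ℝ → ℝ)
    (hu : ∀ x t, u x t = -ω/3 + (1/3) * Real.sqrt (2*ω*(3-ω)) -
      Real.sqrt (2*ω*(3-ω)) *
        (1 / Real.cosh ((1/2) * (ω*(3-ω)/2) ^ ((1:ℝ)/4) * (x - ω*t)))^2) :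
    ∀ x t,
      deriv (fun s => u x s) t
        - deriv (fun s => iteratedDeriv 2 (fun y => u y s) x) t
        + 3 * (u x t)^2 * deriv (fun y => u y t) x =
      2 * deriv (fun y => u y t) x * iteratedDeriv 2 (fun y => u y t) x
        + u x t * iteratedDeriv 3 (fun y => u y t) x := by
  set B := √(2 * ω * (3 - ω)) with hB_def
  set k := (1 / 2) * (ω * (3 - ω) / 2) ^ ((1 : ℝ) / 4)
  have hpos : 0 ≤ ω * (3 - ω) / 2 := by nlinarith
  have hB : B ^ 2 = 2 * ω * (3 - ω) := sq_sqrt (by linarith)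
  have hk : 8 * k ^ 2 = B := by
    rw [mul_pow, rpow_quarter_sq hpos, hB_def,
      show 2 * ω * (3 - ω) = 2 ^ 2 * (ω * (3 - ω) / 2) by ring, sqrt_mul' _ hpos,
      sqrt_sq zero_le_two]
    ring
  refine modifiedCamassaHolm_of_travelingWave (c := ω) (fun x t => ?_)
    (hasDerivAt_sechSq_profile (-ω / 3 + B / 3) B k) (hasDerivAt_sechSq_profile_deriv B k)
    (hasDerivAt_sechSq_profile_deriv2 B k)
    (fun ξ => sechSq_profile_ode (by ring) hB hk _ _)
  rw [hu, sechSq, one_div]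
  ring
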